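/- arXiv:math/0007108 — 2 statements merged into one kernel-verified Lean document; each statement's English description precedes it below -/
import Mathlib

section
/- For every τ in the complex upper half-plane, the derivative of the Jacobi theta function in its first variable at z = 0 is given by the product formula θ′(0, τ) = 2π · exp(πiτ/4) · ∏_{l=1}^∞ (1 − q^l)³, where q = exp(2πiτ); in particular θ′(0, τ) ≠ 0. -/
open Complex Real

/-- The Jacobi theta function, defined by the triple product
`θ(z,τ) = exp(πiτ/4) · 2 sin(πz) · ∏_{l≥1} (1-q^l)(1-q^l e^{2πiz})(1-q^l e^{-2πiz})`
where `q = exp(2πiτ)`. -/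
noncomputable def jacobiThetaProd (z τ : ℂ) : ℂ :=
  Complex.exp ((π : ℂ) * I * τ / 4) * (2 * Complex.sin ((π : ℂ) * z)) *
    ∏' l : ℕ,
      (1 - Complex.exp (2 * (π : ℂ) * I * τ) ^ (l + 1)) *
      (1 - Complex.exp (2 * (π : ℂ) * I * τ) ^ (l + 1) * Complex.exp (2 * (π : ℂ) * I * z)) *
      (1 - Complex.exp (2 * (π : ℂ) * I * τ) ^ (l + 1) * Complex.exp (-(2 * (π : ℂ) * I * z)))

/-- `θ′(0,τ)`: the derivative of the Jacobi theta function in its first variable at `z = 0`. -/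
noncomputable def jacobiThetaProdDeriv (τ : ℂ) : ℂ :=
  deriv (fun z => jacobiThetaProd z τ) 0

/-! For `|q| < 1` the products `∏ (1 - qⁿ w)` converge locally uniformly in `w`, so they are
entire functions of `w`; and `θ(z,τ) = e^{πiτ/4} · 2 sin(πz) · P(z)` where `P(z)` is the product of
three of them, at `w = 1` and `w = e^{±2πiz}`. As `sin 0 = 0`, the product rule gives
`θ′(0,τ) = 2π e^{πiτ/4} P(0)` with `P(0) = (∏ (1 - qⁿ))³`, which is nonzero because no factor
vanishes and `∑ |q|ⁿ < ∞`. -/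

section TprodOneSubPowMul

variable {q : ℂ}

lemma summable_norm_pow_succ_mul (hq : ‖q‖ < 1) (w : ℂ) :
    Summable fun n : ℕ => ‖q ^ (n + 1) * w‖ := by
  simpa [norm_mul, norm_pow] using
    ((summable_nat_add_iff 1).mpr (summable_geometric_of_lt_one (norm_nonneg q) hq)).mul_right ‖w‖

lemma multipliable_one_sub_pow_succ_mul (hq : ‖q‖ < 1) (w : ℂ) :
    Multipliable fun n : ℕ => 1 - q ^ (n + 1) * w := by
  simpa [sub_eq_add_neg] using
    multipliable_one_add_of_summable (f := fun n : ℕ => -(q ^ (n + 1) * w))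
      (by simpa using summable_norm_pow_succ_mul hq w)

lemma hasProdLocallyUniformlyOn_one_sub_pow_succ_mul (hq : ‖q‖ < 1) :
    HasProdLocallyUniformlyOn (fun n w => 1 - q ^ (n + 1) * w)
      (fun w => ∏' n : ℕ, (1 - q ^ (n + 1) * w)) Set.univ := by
  simp_rw [sub_eq_add_neg]
  refine hasProdLocallyUniformlyOn_of_forall_compact isOpen_univ fun K _ hK => ?_
  obtain ⟨R, hR⟩ := hK.isBounded.subset_closedBall 0
  refine (((summable_nat_add_iff 1).mpr
    (summable_geometric_of_lt_one (norm_nonneg q) hq)).mul_right R).hasProdUniformlyOn_nat_one_add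
    hK (.of_forall fun n w hw => ?_) fun n => by fun_prop
  rw [norm_neg, norm_mul, norm_pow]
  exact mul_le_mul_of_nonneg_left (by simpa using hR hw) (by positivity)

lemma differentiable_tprod_one_sub_pow_succ_mul (hq : ‖q‖ < 1) :
    Differentiable ℂ fun w => ∏' n : ℕ, (1 - q ^ (n + 1) * w) := by
  rw [← differentiableOn_univ]
  exact (hasProdLocallyUniformlyOn_one_sub_pow_succ_mul hq).differentiableOn
    (.of_forall fun s => by simpa [Finset.prod_fn] using
      DifferentiableOn.finsetProd fun _ _ => by fun_prop) isOpen_univ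

lemma tprod_one_sub_pow_succ_ne_zero (hq : ‖q‖ < 1) :
    ∏' n : ℕ, (1 - q ^ (n + 1)) ≠ 0 := by
  refine tprod_one_add_ne_zero_of_summable (f := fun n : ℕ => -q ^ (n + 1)) (fun n => ?_)
    (by simpa using summable_norm_pow_succ_mul hq 1)
  rw [← sub_eq_add_neg, sub_ne_zero]
  refine fun h => (pow_lt_one₀ (norm_nonneg q) hq n.succ_ne_zero).ne ?_
  rw [← norm_pow, ← h, norm_one]

end TprodOneSubPowMul

lemma jacobiThetaProd_eq_mul_tprod {τ : ℂ} (hq : ‖cexp (2 * π * I * τ)‖ < 1) (z : ℂ) :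
    jacobiThetaProd z τ = cexp (π * I * τ / 4) * (2 * Complex.sin (π * z)) *
      ((∏' n : ℕ, (1 - cexp (2 * π * I * τ) ^ (n + 1))) *
        (∏' n : ℕ, (1 - cexp (2 * π * I * τ) ^ (n + 1) * cexp (2 * π * I * z))) *
        ∏' n : ℕ, (1 - cexp (2 * π * I * τ) ^ (n + 1) * cexp (-(2 * π * I * z)))) := by
  have h1 := ModularForm.multipliable_one_sub_pow hq
  have h2 := multipliable_one_sub_pow_succ_mul hq (cexp (2 * π * I * z))
  have h3 := multipliable_one_sub_pow_succ_mul hq (cexp (-(2 * π * I * z)))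
  rw [jacobiThetaProd, (h1.mul h2).tprod_mul h3, h1.tprod_mul h2]

theorem hasDerivAt_jacobiThetaProd_zero {τ : ℂ} (hτ : 0 < τ.im) :
    HasDerivAt (fun z => jacobiThetaProd z τ)
      (2 * π * cexp (π * I * τ / 4) * (∏' n : ℕ, (1 - cexp (2 * π * I * τ) ^ (n + 1))) ^ 3) 0 := by
  have hq := UpperHalfPlane.norm_exp_two_pi_I_lt_one ⟨τ, hτ⟩
  set q := cexp (2 * π * I * τ)
  have hG := differentiable_tprod_one_sub_pow_succ_mul hq
  set G : ℂ → ℂ := fun w => ∏' n : ℕ, (1 - q ^ (n + 1) * w)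
  have hsin : HasDerivAt (fun z : ℂ => cexp (π * I * τ / 4) * (2 * Complex.sin (π * z)))
      (cexp (π * I * τ / 4) * (2 * π)) 0 := by
    simpa using (((hasDerivAt_id (0 : ℂ)).const_mul (π : ℂ)).csin.const_mul 2).const_mul
      (cexp (π * I * τ / 4))
  have hprod : DifferentiableAt ℂ
      (fun z => (∏' n : ℕ, (1 - q ^ (n + 1))) * G (cexp (2 * π * I * z)) *
        G (cexp (-(2 * π * I * z)))) 0 := by fun_prop
  rw [funext (jacobiThetaProd_eq_mul_tprod hq)]
  refine (hsin.mul hprod.hasDerivAt).congr_deriv ?_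
  simp only [mul_zero, Complex.exp_zero, mul_one, neg_zero, Complex.sin_zero, zero_mul, add_zero,
    G]
  ring

/-- Product formula for `θ′(0,τ)` and its nonvanishing:
`θ′(0,τ) = 2π·exp(πiτ/4)·∏_{l≥1}(1−q^l)³ ≠ 0`. -/
theorem jacobiThetaDeriv_eq_prod (τ : ℂ) (hτ : 0 < τ.im) :
    jacobiThetaProdDeriv τ =
      2 * (π : ℂ) * Complex.exp ((π : ℂ) * I * τ / 4) *
        ∏' l : ℕ, (1 - Complex.exp (2 * (π : ℂ) * I * τ) ^ (l + 1)) ^ 3 ∧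
    jacobiThetaProdDeriv τ ≠ 0 := by
  have hq := UpperHalfPlane.norm_exp_two_pi_I_lt_one ⟨τ, hτ⟩
  rw [jacobiThetaProdDeriv, (hasDerivAt_jacobiThetaProd_zero hτ).deriv,
    (ModularForm.multipliable_one_sub_pow hq).tprod_pow]
  refine ⟨rfl, ?_⟩
  have h2π : (2 * π : ℂ) ≠ 0 := by exact_mod_cast (by positivity : (2 * π : ℝ) ≠ 0)
  exact mul_ne_zero (mul_ne_zero h2π (Complex.exp_ne_zero _))
    (pow_ne_zero 3 (tprod_one_sub_pow_succ_ne_zero hq))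
end

section
/- Let τ lie in the complex upper half-plane, q = exp(2πiτ), and let x, z ∈ ℂ satisfy x/(2πi) − z ∉ ℤ + τℤ. Then G(exp(x)·q, q) · G(exp(2πiz), q) / G(exp(x − 2πiz)·q, q) = 2πi · θ(x/(2πi), τ) · θ(−z, τ) / (θ(x/(2πi) − z, τ) · θ′(0, τ)). -/
/-! With `y = e^{2πiw}`, both `G(y, q)` and `θ(w, τ)` are products of the q-Pochhammer
symbols `(q; q)_∞`, `(yq; q)_∞`, `(y⁻¹q; q)_∞`. Since `2 sin(πw) = i e^{-πiw} (1 - y)` and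
`θ'(0, τ) = 2π e^{πiτ/4} (q; q)_∞³`, this gives
`G(e^{2πiw}, q) = -2πi e^{πiw} θ(w, τ) / θ'(0, τ)`, and the quasi-periodicity
`G(yq, q) = -y⁻¹ G(y, q)` turns it into `G(e^{2πiw} q, q) = 2πi e^{-πiw} θ(w, τ) / θ'(0, τ)`.
Substituting these into the three factors, the exponential prefactors cancel and the oddness of
`θ` accounts for the sign. -/

open Complex Real

/-- `G(y,q) = ∏_{k≥1} (1 - y q^{k-1})(1 - y⁻¹ q^k)/(1 - q^k)²`. -/
noncomputable def Gfun (y q : ℂ) : ℂ :=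
  ∏' k : ℕ, (1 - y * q ^ k) * (1 - y⁻¹ * q ^ (k + 1)) / (1 - q ^ (k + 1)) ^ 2

noncomputable def qPochhammer (a q : ℂ) : ℂ := ∏' n : ℕ, (1 - a * q ^ n)

section qPochhammer

variable {q : ℂ}

lemma summable_norm_mul_pow (hq : ‖q‖ < 1) (a : ℂ) :
    Summable fun n : ℕ ↦ ‖a * q ^ n‖ := by
  simpa [norm_mul, norm_pow] using
    (summable_geometric_of_lt_one (norm_nonneg q) hq).mul_left ‖a‖

lemma multipliable_one_sub_mul_pow (hq : ‖q‖ < 1) (a : ℂ) :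
    Multipliable fun n : ℕ ↦ 1 - a * q ^ n := by
  simpa [sub_eq_add_neg] using
    multipliable_one_add_of_summable (f := fun n ↦ -(a * q ^ n))
      (by simpa using summable_norm_mul_pow hq a)

lemma qPochhammer_eq_one_sub_mul (hq : ‖q‖ < 1) (a : ℂ) :
    qPochhammer a q = (1 - a) * qPochhammer (a * q) q := by
  have hterm (n : ℕ) : 1 - a * q ^ (n + 1) = 1 - a * q * q ^ n := by ring
  have hshift : Multipliable fun n : ℕ ↦ 1 - a * q ^ (n + 1) := by
    simpa only [hterm] using multipliable_one_sub_mul_pow hq (a * q)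
  rw [qPochhammer, qPochhammer, tprod_eq_zero_mul' (f := fun n : ℕ ↦ 1 - a * q ^ n) hshift]
  simp only [hterm, pow_zero, mul_one]

lemma qPochhammer_ne_zero (hq : ‖q‖ < 1) {a : ℂ} (ha : ∀ n : ℕ, a * q ^ n ≠ 1) :
    qPochhammer a q ≠ 0 := by
  simpa [qPochhammer, sub_eq_add_neg] using
    tprod_one_add_ne_zero_of_summable (f := fun n ↦ -(a * q ^ n))
      (fun n ↦ by rw [← sub_eq_add_neg]; exact sub_ne_zero.2 (ha n).symm)
      (by simpa using summable_norm_mul_pow hq a)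

lemma qPochhammer_self_ne_zero (hq : ‖q‖ < 1) : qPochhammer q q ≠ 0 := by
  refine qPochhammer_ne_zero hq fun n h ↦ ?_
  have : ‖q‖ ^ (n + 1) < 1 := pow_lt_one₀ (norm_nonneg q) hq n.succ_ne_zero
  rw [← norm_pow, pow_succ', h, norm_one] at this
  exact this.false

lemma differentiable_qPochhammer (hq : ‖q‖ < 1) : Differentiable ℂ (qPochhammer · q) := by
  intro a
  have hball : HasProdLocallyUniformlyOn (fun n b ↦ 1 + -(b * q ^ n))
      (fun b ↦ ∏' n, (1 + -(b * q ^ n))) (Metric.ball 0 (‖a‖ + 1)) :=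
    Summable.hasProdLocallyUniformlyOn_nat_one_add Metric.isOpen_ball
      ((summable_geometric_of_lt_one (norm_nonneg q) hq).mul_left (‖a‖ + 1))
      (.of_forall fun n b hb ↦ by
        rw [norm_neg, norm_mul, norm_pow]
        exact mul_le_mul_of_nonneg_right (by simpa using (mem_ball_zero_iff.1 hb).le)
          (by positivity))
      (fun n ↦ by fun_prop)
  have hd := hball.differentiableOn (.of_forall fun s ↦ by fun_prop) Metric.isOpen_ball
  simpa [qPochhammer, sub_eq_add_neg] using
    hd.differentiableAt (Metric.isOpen_ball.mem_nhds (by simp))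

end qPochhammer

section Gfun

variable {q : ℂ}

lemma Gfun_eq_qPochhammer (hq : ‖q‖ < 1) (y : ℂ) :
    Gfun y q = qPochhammer y q * qPochhammer (y⁻¹ * q) q / qPochhammer q q ^ 2 := by
  have hterm (k : ℕ) : (1 - y * q ^ k) * (1 - y⁻¹ * q ^ (k + 1)) / (1 - q ^ (k + 1)) ^ 2 =
      (1 - y * q ^ k) * (1 - y⁻¹ * q * q ^ k) / (1 - q * q ^ k) ^ 2 := by ring
  have hprod := ((multipliable_one_sub_mul_pow hq y).hasProd.mul
    (multipliable_one_sub_mul_pow hq (y⁻¹ * q)).hasProd).div₀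
    ((multipliable_one_sub_mul_pow hq q).hasProd.pow 2)
    (pow_ne_zero 2 (qPochhammer_self_ne_zero hq))
  rw [Gfun, tprod_congr hterm]
  exact hprod.tprod_eq

lemma Gfun_mul_eq_neg_inv_mul (hq : ‖q‖ < 1) (hq0 : q ≠ 0) {y : ℂ} (hy : y ≠ 0) :
    Gfun (y * q) q = -y⁻¹ * Gfun y q := by
  rw [Gfun_eq_qPochhammer hq, Gfun_eq_qPochhammer hq, mul_inv, mul_assoc, inv_mul_cancel₀ hq0,
    mul_one, qPochhammer_eq_one_sub_mul hq y, qPochhammer_eq_one_sub_mul hq y⁻¹]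
  field_simp
  ring

end Gfun

lemma Complex.one_sub_exp_two_mul_I (z : ℂ) :
    1 - exp (2 * z * I) = -I * exp (z * I) * (2 * sin z) := by
  have hE : exp (z * I) ≠ 0 := Complex.exp_ne_zero _
  rw [Complex.sin, neg_mul z I, Complex.exp_neg, show 2 * z * I = z * I + z * I by ring,
    Complex.exp_add]
  field_simp
  rw [Complex.I_sq]
  ring

section JacobiTheta

lemma jacobiThetaProd_neg (w τ : ℂ) : jacobiThetaProd (-w) τ = -jacobiThetaProd w τ := by
  simp only [jacobiThetaProd, mul_neg, neg_neg, Complex.sin_neg]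
  rw [tprod_congr fun l ↦ mul_right_comm _ _ _]
  ring

variable {τ : ℂ}

lemma norm_exp_two_pi_I_mul_lt_one (hτ : 0 < τ.im) : ‖exp (2 * π * I * τ)‖ < 1 :=
  UpperHalfPlane.norm_exp_two_pi_I_lt_one ⟨τ, hτ⟩

lemma jacobiThetaProd_eq_qPochhammer (hτ : 0 < τ.im) (w : ℂ) :
    jacobiThetaProd w τ = exp (π * I * τ / 4) * (2 * sin (π * w)) *
      (qPochhammer (exp (2 * π * I * τ)) (exp (2 * π * I * τ)) *
        qPochhammer (exp (2 * π * I * w) * exp (2 * π * I * τ)) (exp (2 * π * I * τ)) *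
        qPochhammer (exp (-(2 * π * I * w)) * exp (2 * π * I * τ)) (exp (2 * π * I * τ))) := by
  set q := exp (2 * π * I * τ)
  have hq : ‖q‖ < 1 := norm_exp_two_pi_I_mul_lt_one hτ
  have hprod := ((multipliable_one_sub_mul_pow hq q).hasProd.mul
    (multipliable_one_sub_mul_pow hq (exp (2 * π * I * w) * q)).hasProd).mul
    (multipliable_one_sub_mul_pow hq (exp (-(2 * π * I * w)) * q)).hasProd
  rw [jacobiThetaProd]
  congr 1
  exact (tprod_congr fun l ↦ by ring).trans hprod.tprod_eq

lemma jacobiThetaProdDeriv_eq (hτ : 0 < τ.im) :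
    jacobiThetaProdDeriv τ =
      2 * π * exp (π * I * τ / 4) *
        qPochhammer (exp (2 * π * I * τ)) (exp (2 * π * I * τ)) ^ 3 := by
  set q := exp (2 * π * I * τ)
  have hq : ‖q‖ < 1 := norm_exp_two_pi_I_mul_lt_one hτ
  have hP : Differentiable ℂ (qPochhammer · q) := differentiable_qPochhammer hq
  have hθ : (jacobiThetaProd · τ) = fun w : ℂ ↦ exp (π * I * τ / 4) * (2 * sin (π * w)) *
      (qPochhammer q q * qPochhammer (exp (2 * π * I * w) * q) q *
        qPochhammer (exp (-(2 * π * I * w)) * q) q) :=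
    funext (jacobiThetaProd_eq_qPochhammer hτ)
  have hsin : deriv (fun w : ℂ ↦ sin (π * w)) 0 = π := by
    simpa using ((hasDerivAt_id (0 : ℂ)).const_mul (π : ℂ)).csin.deriv
  rw [jacobiThetaProdDeriv, hθ, deriv_fun_mul (by fun_prop) (by fun_prop)]
  simp [hsin]
  ring

lemma jacobiThetaProdDeriv_ne_zero (hτ : 0 < τ.im) : jacobiThetaProdDeriv τ ≠ 0 := by
  rw [jacobiThetaProdDeriv_eq hτ]
  simpa [Real.pi_ne_zero] using qPochhammer_self_ne_zero (norm_exp_two_pi_I_mul_lt_one hτ)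

lemma Gfun_exp_eq_jacobiThetaProd (hτ : 0 < τ.im) (w : ℂ) :
    Gfun (exp (2 * π * I * w)) (exp (2 * π * I * τ)) =
      -(2 * π * I) * exp (π * I * w) * jacobiThetaProd w τ / jacobiThetaProdDeriv τ := by
  have hq := norm_exp_two_pi_I_mul_lt_one hτ
  have hP := qPochhammer_self_ne_zero hq
  have hπ : (π : ℂ) ≠ 0 := Complex.ofReal_ne_zero.2 Real.pi_ne_zero
  have hsin : 1 - exp (2 * π * I * w) = -I * exp (π * I * w) * (2 * sin (π * w)) := by
    rw [show 2 * π * I * w = 2 * (π * w) * I by ring, show π * I * w = π * w * I by ring]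
    exact Complex.one_sub_exp_two_mul_I _
  rw [Gfun_eq_qPochhammer hq, qPochhammer_eq_one_sub_mul hq, hsin, ← Complex.exp_neg,
    jacobiThetaProd_eq_qPochhammer hτ, jacobiThetaProdDeriv_eq hτ]
  field_simp

lemma Gfun_exp_mul_eq_jacobiThetaProd (hτ : 0 < τ.im) (w : ℂ) :
    Gfun (exp (2 * π * I * w) * exp (2 * π * I * τ)) (exp (2 * π * I * τ)) =
      2 * π * I * exp (-(π * I * w)) * jacobiThetaProd w τ / jacobiThetaProdDeriv τ := by
  have hexp : exp (-(2 * π * I * w)) * exp (π * I * w) = exp (-(π * I * w)) := by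
    rw [← Complex.exp_add]
    ring_nf
  rw [Gfun_mul_eq_neg_inv_mul (norm_exp_two_pi_I_mul_lt_one hτ) (Complex.exp_ne_zero _)
    (Complex.exp_ne_zero _), Gfun_exp_eq_jacobiThetaProd hτ, ← Complex.exp_neg, ← hexp]
  ring

end JacobiTheta

theorem G_ratio_eq_theta_ratio_general (τ : ℂ) (hτ : 0 < τ.im) (x z : ℂ) :
    Gfun (Complex.exp x * Complex.exp (2 * (π : ℂ) * I * τ))
        (Complex.exp (2 * (π : ℂ) * I * τ)) *
      Gfun (Complex.exp (2 * (π : ℂ) * I * z)) (Complex.exp (2 * (π : ℂ) * I * τ)) /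
      Gfun (Complex.exp (x - 2 * (π : ℂ) * I * z) * Complex.exp (2 * (π : ℂ) * I * τ))
        (Complex.exp (2 * (π : ℂ) * I * τ)) =
      2 * (π : ℂ) * I * jacobiThetaProd (x / (2 * (π : ℂ) * I)) τ * jacobiThetaProd (-z) τ /
        (jacobiThetaProd (x / (2 * (π : ℂ) * I) - z) τ * jacobiThetaProdDeriv τ) := by
  have h2πI : 2 * (π : ℂ) * I ≠ 0 := by simp [Real.pi_ne_zero, Complex.I_ne_zero]
  set u := x / (2 * π * I)
  have hx : x = 2 * π * I * u := (mul_div_cancel₀ x h2πI).symm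
  have hxz : x - 2 * π * I * z = 2 * π * I * (u - z) := by rw [hx]; ring
  have hexp : exp (-(π * I * u)) * exp (π * I * z) = exp (-(π * I * (u - z))) := by
    rw [← Complex.exp_add]
    ring_nf
  have hθ' := jacobiThetaProdDeriv_ne_zero hτ
  rw [hxz, hx, Gfun_exp_mul_eq_jacobiThetaProd hτ, Gfun_exp_eq_jacobiThetaProd hτ,
    Gfun_exp_mul_eq_jacobiThetaProd hτ, jacobiThetaProd_neg, ← hexp]
  field_simp

/-- `G(e^x q, q)·G(e^{2πiz}, q)/G(e^{x−2πiz} q, q)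
      = 2πi·θ(x/(2πi),τ)·θ(−z,τ)/(θ(x/(2πi)−z,τ)·θ′(0,τ))`. -/
theorem G_ratio_eq_theta_ratio (τ : ℂ) (hτ : 0 < τ.im) (x z : ℂ)
    (h : ¬∃ m n : ℤ, x / (2 * (π : ℂ) * I) - z = (m : ℂ) + (n : ℂ) * τ) :
    Gfun (Complex.exp x * Complex.exp (2 * (π : ℂ) * I * τ))
        (Complex.exp (2 * (π : ℂ) * I * τ)) *
      Gfun (Complex.exp (2 * (π : ℂ) * I * z)) (Complex.exp (2 * (π : ℂ) * I * τ)) /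
      Gfun (Complex.exp (x - 2 * (π : ℂ) * I * z) * Complex.exp (2 * (π : ℂ) * I * τ))
        (Complex.exp (2 * (π : ℂ) * I * τ)) =
      2 * (π : ℂ) * I * jacobiThetaProd (x / (2 * (π : ℂ) * I)) τ * jacobiThetaProd (-z) τ /
        (jacobiThetaProd (x / (2 * (π : ℂ) * I) - z) τ * jacobiThetaProdDeriv τ) :=
  G_ratio_eq_theta_ratio_general τ hτ x z
end
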